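/- Let 0 < ε₁ < 1/16 and 0 < ε₂ < 1/2. For all ρ ∈ [1,5] and θ ∈ ℝ, if the point Φ(ρ,θ) = (χ(ρ)cos θ, η(ρ)sin θ) lies on the ellipse γ = {(x,y) : x²/4 + y²/16 = 1}, then the point Φ(ρ + ε₁P(ρ), θ + ε₂ sin 2θ) = (x',y') lies strictly inside γ, i.e., x'²/4 + y'²/16 < 1. -/

import Mathlib

open Real Set

noncomputable def χ (ρ : ℝ) : ℝ := (7 * ρ - 5) / (ρ + 1)
noncomputable def η (ρ : ℝ) : ℝ := (ρ + 5) / (7 - ρ)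
noncomputable def P (ρ : ℝ) : ℝ := (ρ - 1) * (ρ - 3) ^ 2 * (ρ - 5)

/-- The parametrization `Φ(ρ,θ) = (χ(ρ) cos θ, η(ρ) sin θ)`. -/
noncomputable def Φ (ρ θ : ℝ) : ℝ × ℝ := (χ ρ * Real.cos θ, η ρ * Real.sin θ)

/-!
Write `L(x, y) = x²/4 + y²/16`. Since `χ` and `η` are positive and increasing, `L (Φ ρ θ)` is
strictly increasing in `ρ`, and `ρ ↦ ρ + ε₁ P(ρ)` maps `[1, 5]` into `[1, ρ]`. Since `η < 2χ` on
`[1, 5]`, the coefficient of `cos² θ` in `L (Φ ρ θ)` dominates that of `sin² θ`, so `L` drops when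
`cos² θ` drops, and with `t = ε₂ sin 2θ` we have `cos² θ - cos² (θ + t) = sin (2θ + t) sin t > 0`
whenever `sin 2θ ≠ 0`. If `sin 2θ = 0` the angle does not move, but then `Φ ρ θ ∈ γ` forces
`χ ρ = 2` or `η ρ = 4`, i.e. `ρ ∈ {7/5, 23/5}`, where `P ρ < 0` and `ρ` strictly decreases.
-/

noncomputable def ellipseLevel (p : ℝ × ℝ) : ℝ := p.1 ^ 2 / 4 + p.2 ^ 2 / 16

lemma χ_strictMonoOn : StrictMonoOn χ (Ioi (-1)) := by
  intro a (ha : -1 < a) b (hb : -1 < b) hab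
  rw [χ, χ, div_lt_div_iff₀ (by linarith) (by linarith)]
  linarith

lemma η_strictMonoOn : StrictMonoOn η (Iio 7) := by
  intro a (ha : a < 7) b (hb : b < 7) hab
  rw [η, η, div_lt_div_iff₀ (by linarith) (by linarith)]
  linarith

lemma χ_pos {ρ : ℝ} (hρ : 5 / 7 < ρ) : 0 < χ ρ :=
  div_pos (by linarith) (by linarith)

lemma η_pos {ρ : ℝ} (h₁ : -5 < ρ) (h₂ : ρ < 7) : 0 < η ρ :=
  div_pos (by linarith) (by linarith)

lemma η_lt_two_mul_χ {ρ : ℝ} (hρ : ρ ∈ Icc (1 : ℝ) 5) : η ρ < 2 * χ ρ := by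
  obtain ⟨h₁, h₅⟩ := hρ
  rw [η, χ, mul_div_assoc', div_lt_div_iff₀ (by linarith) (by linarith)]
  nlinarith

lemma P_nonpos {ρ : ℝ} (hρ : ρ ∈ Icc (1 : ℝ) 5) : P ρ ≤ 0 := by
  obtain ⟨h₁, h₅⟩ := hρ
  have : 0 ≤ (ρ - 1) * (ρ - 3) ^ 2 * (5 - ρ) := by
    have := sq_nonneg (ρ - 3)
    have : 0 ≤ 5 - ρ := by linarith
    positivity
  rw [P]; linarith

lemma add_mul_P_mem_Icc {ε ρ : ℝ} (hρ : ρ ∈ Icc (1 : ℝ) 5) (hε : 0 ≤ ε) (hε' : ε ≤ 1 / 16) :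
    ρ + ε * P ρ ∈ Icc 1 ρ := by
  obtain ⟨h₁, h₅⟩ := hρ
  refine ⟨?_, by nlinarith [P_nonpos ⟨h₁, h₅⟩]⟩
  -- `(ρ - 3)² (ρ - 5) + 16 = (ρ - 1) ((ρ - 5)² + 4)`, and
  -- `ρ + ε P ρ - 1 = (ρ - 1) (1 + ε (ρ - 3)² (ρ - 5))`.
  have hcubic : -16 ≤ (ρ - 3) ^ 2 * (ρ - 5) := by
    nlinarith [mul_nonneg (sub_nonneg.2 h₁) (by positivity : (0:ℝ) ≤ (ρ - 5) ^ 2 + 4)]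
  have : 0 ≤ 1 + ε * ((ρ - 3) ^ 2 * (ρ - 5)) := by nlinarith
  have := mul_nonneg (sub_nonneg.2 h₁) this
  rw [P]; nlinarith

lemma add_mul_P_lt {ε ρ : ℝ} (hρ : ρ ∈ Icc (1 : ℝ) 5) (hε : 0 < ε) (hP : P ρ ≠ 0) :
    ρ + ε * P ρ < ρ := by
  have := mul_neg_of_pos_of_neg hε ((P_nonpos hρ).lt_of_ne hP)
  linarith

lemma sin_add_mul_sin_mul_sin_pos_of_sin_pos {ε u : ℝ} (hε : 0 < ε) (hε' : ε ≤ 1 / 2)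
    (hu : 0 < sin u) : 0 < sin (u + ε * sin u) * sin (ε * sin u) := by
  set t := ε * sin u
  have ht₀ : 0 < t := mul_pos hε hu
  have ht : t ≤ 1 / 2 := by nlinarith [sin_le_one u]
  have hsin_t : 0 < sin t := sin_pos_of_pos_of_lt_pi ht₀ (by linarith [pi_gt_three])
  have hcos_t : 1 / 2 < cos t := by
    rw [← cos_pi_div_three]
    exact cos_lt_cos_of_nonneg_of_le_pi ht₀.le (by linarith [pi_pos]) (by linarith [pi_gt_three])
  -- `sin (u + t) = sin u cos t + cos u sin t ≥ sin u cos t - t = sin u (cos t - ε) > 0`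
  have : 0 < sin (u + t) := by
    rw [sin_add]
    nlinarith [neg_one_le_cos u, sin_le ht₀.le, mul_pos hu (by linarith : 0 < cos t - ε)]
  exact mul_pos this hsin_t

lemma sin_add_mul_sin_mul_sin_pos {ε u : ℝ} (hε : 0 < ε) (hε' : ε ≤ 1 / 2)
    (hu : sin u ≠ 0) : 0 < sin (u + ε * sin u) * sin (ε * sin u) := by
  rcases hu.lt_or_gt with hu | hu
  · have := sin_add_mul_sin_mul_sin_pos_of_sin_pos hε hε' (u := -u) (by rwa [sin_neg, neg_pos])
    rwa [sin_neg, mul_neg, ← neg_add, sin_neg, sin_neg, neg_mul_neg] at this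
  · exact sin_add_mul_sin_mul_sin_pos_of_sin_pos hε hε' hu

lemma cos_sq_sub_cos_add_sq (θ t : ℝ) :
    cos θ ^ 2 - cos (θ + t) ^ 2 = sin (2 * θ + t) * sin t := by
  rw [cos_sq, cos_sq, show 2 * (θ + t) = 2 * θ + t + t by ring, show 2 * θ = 2 * θ + t - t by ring,
    cos_add, cos_sub]
  ring_nf

lemma cos_add_mul_sin_two_mul_sq_lt {ε θ : ℝ} (hε : 0 < ε) (hε' : ε ≤ 1 / 2)
    (hθ : sin (2 * θ) ≠ 0) : cos (θ + ε * sin (2 * θ)) ^ 2 < cos θ ^ 2 := by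
  have := cos_sq_sub_cos_add_sq θ (ε * sin (2 * θ))
  have := sin_add_mul_sin_mul_sin_pos hε hε' hθ
  linarith

lemma ellipseLevel_lt_of_cos_sq_lt {A B x y : ℝ} (hAB : B ^ 2 < 4 * A ^ 2)
    (hxy : cos x ^ 2 < cos y ^ 2) :
    ellipseLevel (A * cos x, B * sin x) < ellipseLevel (A * cos y, B * sin y) := by
  simp only [ellipseLevel, mul_pow]
  nlinarith [sin_sq_add_cos_sq x, sin_sq_add_cos_sq y, mul_lt_mul_of_pos_left hxy (sub_pos.2 hAB)]

lemma ellipseLevel_Φ_strictMonoOn (θ : ℝ) :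
    StrictMonoOn (fun ρ => ellipseLevel (Φ ρ θ)) (Ioo (5 / 7) 7) := by
  intro a ⟨ha₁, ha₂⟩ b ⟨hb₁, hb₂⟩ hab
  have hχ : χ a ^ 2 < χ b ^ 2 := pow_lt_pow_left₀
    (χ_strictMonoOn (by simp; linarith) (by simp; linarith) hab) (χ_pos ha₁).le two_ne_zero
  have hη : η a ^ 2 < η b ^ 2 := pow_lt_pow_left₀
    (η_strictMonoOn ha₂ hb₂ hab) (η_pos (by linarith) ha₂).le two_ne_zero
  simp only [ellipseLevel, Φ, mul_pow]
  rcases (sq_nonneg (cos θ)).eq_or_lt with hc | hc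
  · nlinarith [sin_sq_add_cos_sq θ]
  · nlinarith [mul_lt_mul_of_pos_right hχ hc, mul_le_mul_of_nonneg_right hη.le (sq_nonneg (sin θ))]

lemma eq_of_ellipseLevel_Φ_eq_one_of_sin_two_mul_eq_zero {ρ θ : ℝ} (hρ : ρ ∈ Ioo (5 / 7 : ℝ) 7)
    (h : ellipseLevel (Φ ρ θ) = 1) (hθ : sin (2 * θ) = 0) : ρ = 7 / 5 ∨ ρ = 23 / 5 := by
  obtain ⟨h₁, h₂⟩ := hρ
  simp only [ellipseLevel, Φ, mul_pow] at h
  rw [sin_two_mul, mul_eq_zero, mul_eq_zero] at hθ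
  rcases hθ with (hθ | hθ) | hθ
  · norm_num at hθ
  · have hχ : χ ρ = χ (7 / 5) := by
      have hcos : cos θ ^ 2 = 1 := by simpa [hθ] using sin_sq_add_cos_sq θ
      rw [hθ, hcos] at h
      have : χ ρ = 2 := by nlinarith [χ_pos h₁]
      rw [this]; norm_num [χ]
    exact .inl (χ_strictMonoOn.injOn (by simp; linarith) (by norm_num) hχ)
  · have hη : η ρ = η (23 / 5) := by
      have hsin : sin θ ^ 2 = 1 := by simpa [hθ] using sin_sq_add_cos_sq θ
      rw [hθ, hsin] at h
      have : η ρ = 4 := by nlinarith [η_pos (by linarith) h₂]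
      rw [this]; norm_num [η]
    exact .inr (η_strictMonoOn.injOn h₂ (by norm_num) hη)

theorem stmt7 (ε₁ ε₂ : ℝ) (hε₁ : 0 < ε₁) (hε₁' : ε₁ < 1 / 16)
    (hε₂ : 0 < ε₂) (hε₂' : ε₂ < 1 / 2) :
    ∀ ρ ∈ Icc (1:ℝ) 5, ∀ θ : ℝ,
      (Φ ρ θ).1 ^ 2 / 4 + (Φ ρ θ).2 ^ 2 / 16 = 1 →
      (Φ (ρ + ε₁ * P ρ) (θ + ε₂ * Real.sin (2 * θ))).1 ^ 2 / 4 +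
        (Φ (ρ + ε₁ * P ρ) (θ + ε₂ * Real.sin (2 * θ))).2 ^ 2 / 16 < 1 := by
  intro ρ hρ θ (h : ellipseLevel (Φ ρ θ) = 1)
  show ellipseLevel (Φ (ρ + ε₁ * P ρ) (θ + ε₂ * sin (2 * θ))) < 1
  have hsub : Icc (1 : ℝ) 5 ⊆ Ioo (5 / 7) 7 := Icc_subset_Ioo (by norm_num) (by norm_num)
  obtain ⟨hρ'₁, hρ'ρ⟩ := add_mul_P_mem_Icc hρ hε₁.le hε₁'.le
  have hρ' : ρ + ε₁ * P ρ ∈ Ioo (5 / 7 : ℝ) 7 := hsub ⟨hρ'₁, hρ'ρ.trans hρ.2⟩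
  by_cases hθ : sin (2 * θ) = 0
  · have hP : P ρ ≠ 0 := by
      rcases eq_of_ellipseLevel_Φ_eq_one_of_sin_two_mul_eq_zero (hsub hρ) h hθ with rfl | rfl <;>
        norm_num [P]
    rw [hθ, mul_zero, add_zero, ← h]
    exact ellipseLevel_Φ_strictMonoOn θ hρ' (hsub hρ) (add_mul_P_lt hρ hε₁ hP)
  · calc ellipseLevel (Φ (ρ + ε₁ * P ρ) (θ + ε₂ * sin (2 * θ)))
        ≤ ellipseLevel (Φ ρ (θ + ε₂ * sin (2 * θ))) :=
          (ellipseLevel_Φ_strictMonoOn _).monotoneOn hρ' (hsub hρ) hρ'ρ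
      _ < ellipseLevel (Φ ρ θ) := by
          have := η_lt_two_mul_χ hρ
          refine ellipseLevel_lt_of_cos_sq_lt ?_ (cos_add_mul_sin_two_mul_sq_lt hε₂ hε₂'.le hθ)
          nlinarith [η_pos (ρ := ρ) (by linarith [hρ.1]) (by linarith [hρ.2])]
      _ = 1 := h
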